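/- arXiv:1612.04727 — 4 statements merged into one kernel-verified Lean document; each statement's English description precedes it below -/
import Mathlib

section
/- Let A be a commutative ring, d : A → A a derivation, and I an ideal of A such that d maps I into I and I^k = 0 for some natural number k. Then for every ω ∈ I and every η ∈ A there exists a unique F ∈ A satisfying F = ω * d(F) + η. -/
private lemma d_pow_stable {A : Type*} [CommRing A] (d : Derivation ℤ A A) (I : Ideal A)
    (hdI : ∀ x ∈ I, d x ∈ I) : ∀ n : ℕ, ∀ x ∈ I ^ n, d x ∈ I ^ n := by
  intro n
  induction n with
  | zero => intro x _; simp
  | succ n ih =>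
    intro x hx
    rw [pow_succ] at hx ⊢
    refine Submodule.mul_induction_on hx ?_ ?_
    · intro m hm a ha
      have : d (m * a) = m * d a + a * d m := by
        simp only [Derivation.leibniz, smul_eq_mul]
      rw [this]
      refine Ideal.add_mem _ (Ideal.mul_mem_mul hm (hdI a ha)) ?_
      rw [mul_comm a (d m)]
      exact Ideal.mul_mem_mul (ih m hm) ha
    · intro a b ha hb
      rw [map_add]; exact Ideal.add_mem _ ha hb

/-- Let `A` be a commutative ring, `d : A → A` a derivation, and `I` an
ideal of `A` such that `d` maps `I` into `I` and `I ^ k = 0` for some natural number `k`.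
Then for every `ω ∈ I` and every `η ∈ A` there exists a unique `F ∈ A` satisfying
`F = ω * d F + η`. -/
theorem auxiliary_field_unique_solution
    (A : Type*) [CommRing A] (d : Derivation ℤ A A) (I : Ideal A)
    (hdI : ∀ x ∈ I, d x ∈ I) (k : ℕ) (hk : I ^ k = ⊥) :
    ∀ ω ∈ I, ∀ η : A, ∃! F : A, F = ω * d F + η := by
  intro ω hω η
  -- iterate the map T F = ω * d F + η
  let T : A → A := fun F => ω * d F + η
  -- successive differences lie in increasing powers of I
  have key : ∀ m : ℕ, T^[m+1] η - T^[m] η ∈ I ^ (m+1) := by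
    intro m
    induction m with
    | zero =>
      have : T^[1] η - T^[0] η = ω * d η := by
        simp only [Function.iterate_one, Function.iterate_zero, id_eq, T]; ring
      rw [this, pow_one]
      exact Ideal.mul_mem_right (d η) _ hω
    | succ m ih =>
      have : T^[m+2] η - T^[m+1] η = ω * d (T^[m+1] η - T^[m] η) := by
        simp only [Function.iterate_succ_apply', T, map_sub]
        ring
      rw [this, pow_succ, mul_comm (I ^ (m+1)) I]
      exact Ideal.mul_mem_mul hω (d_pow_stable d I hdI _ _ ih)
  have hfix : T^[k+1] η = T^[k] η := by
    have h1 : T^[k+1] η - T^[k] η ∈ I ^ (k+1) := key k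
    have h2 : I ^ (k+1) ≤ I ^ k := Ideal.pow_le_pow_right (by omega)
    have := h2 h1
    rw [hk] at this
    have h3 : T^[k+1] η - T^[k] η = 0 := this
    exact sub_eq_zero.mp h3
  refine ⟨T^[k] η, ?_, ?_⟩
  · show T^[k] η = ω * d (T^[k] η) + η
    conv_lhs => rw [← hfix, Function.iterate_succ_apply']
  · -- uniqueness
    intro F hF
    have hdiff : ∀ n : ℕ, F - T^[k] η ∈ I ^ n := by
      intro n
      induction n with
      | zero => simp
      | succ n ih =>
        have hG : T^[k] η = ω * d (T^[k] η) + η := by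
          conv_lhs => rw [← hfix, Function.iterate_succ_apply']
        have : F - T^[k] η = ω * d (F - T^[k] η) := by
          rw [map_sub]; nth_rewrite 1 [hF]; nth_rewrite 1 [hG]; ring
        rw [this, pow_succ, mul_comm (I ^ n) I]
        exact Ideal.mul_mem_mul hω (d_pow_stable d I hdI _ _ ih)
    have := hdiff k
    rw [hk] at this
    exact sub_eq_zero.mp this
end

section
/- Let A be a commutative ring, I an ideal of A with I^k = 0 for some natural number k, and let d_1, …, d_n : A → A be derivations each of which maps I into I. Then for every choice of elements ω_1, …, ω_n ∈ I and every η ∈ A there exists a unique F ∈ A satisfying F = Σ_{μ=1}^{n} ω_μ * d_μ(F) + η. -/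
/-- Let `A` be a commutative ring, `I` an ideal of `A` with `I ^ k = 0`
for some natural number `k`, and let `d 1, …, d n : A → A` be derivations each of which
maps `I` into `I`. Then for every choice of elements `ω 1, …, ω n ∈ I` and every `η ∈ A`
there exists a unique `F ∈ A` satisfying `F = ∑ μ, ω μ * d μ F + η`. -/
theorem auxiliary_field_unique_solution_multi
    (A : Type*) [CommRing A] (I : Ideal A) (k : ℕ) (hk : I ^ k = ⊥)
    (n : ℕ) (d : Fin n → Derivation ℤ A A)
    (hdI : ∀ μ : Fin n, ∀ x ∈ I, d μ x ∈ I) :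
    ∀ ω : Fin n → A, (∀ μ, ω μ ∈ I) → ∀ η : A,
      ∃! F : A, F = (∑ μ : Fin n, ω μ * d μ F) + η := by
  intro ω hω η
  -- derivations preserve powers of I
  have hdpow : ∀ μ : Fin n, ∀ m : ℕ, ∀ x ∈ I ^ m, d μ x ∈ I ^ m := by
    intro μ m
    induction m with
    | zero => intro x _; simp
    | succ m ih =>
      intro x hx
      rw [pow_succ] at hx ⊢
      refine Submodule.mul_induction_on hx ?_ ?_
      · intro a ha b hb
        have : d μ (a * b) = a * d μ b + d μ a * b := by
          rw [Derivation.leibniz]; simp [smul_eq_mul]; ring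
        rw [this]
        exact Submodule.add_mem _ (Ideal.mul_mem_mul ha (hdI μ b hb))
          (Ideal.mul_mem_mul (ih a ha) hb)
      · intro x y hx hy
        rw [map_add]
        exact Submodule.add_mem _ hx hy
  set T : A → A := fun F => (∑ μ : Fin n, ω μ * d μ F) + η with hT
  -- contraction property
  have hcontr : ∀ m : ℕ, ∀ F G : A, F - G ∈ I ^ m → T F - T G ∈ I ^ (m + 1) := by
    intro m F G h
    have key : T F - T G = ∑ μ : Fin n, ω μ * d μ (F - G) := by
      simp only [hT, map_sub, mul_sub]
      rw [Finset.sum_sub_distrib]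
      ring
    rw [key]
    refine Ideal.sum_mem _ fun μ _ => ?_
    rw [pow_succ, mul_comm (ω μ)]
    exact Ideal.mul_mem_mul (hdpow μ m _ h) (hω μ)
  -- iterates become constant
  have hiter : ∀ m : ℕ, ∀ F G : A, T^[m] F - T^[m] G ∈ I ^ m := by
    intro m
    induction m with
    | zero => intro F G; simp
    | succ m ih =>
      intro F G
      rw [Function.iterate_succ_apply', Function.iterate_succ_apply']
      exact hcontr m _ _ (ih F G)
  have hconst : ∀ F G : A, T^[k] F = T^[k] G := by
    intro F G
    have := hiter k F G
    rw [hk] at this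
    exact sub_eq_zero.mp ((Submodule.mem_bot A).mp this)
  refine ⟨T^[k] 0, ?_, ?_⟩
  · have h1 : T (T^[k] 0) = T^[k] (T 0) :=
      (Function.iterate_succ_apply' T k 0).symm.trans (Function.iterate_succ_apply T k 0)
    have h2 : T^[k] (T 0) = T^[k] 0 := hconst _ _
    have : T (T^[k] 0) = T^[k] 0 := h1.trans h2
    exact this.symm
  · intro G hG
    have hGfix : T G = G := by rw [hT]; exact hG.symm
    have h0fix : T (T^[k] 0) = T^[k] 0 :=
      ((Function.iterate_succ_apply' T k 0).symm.trans
        (Function.iterate_succ_apply T k 0)).trans (hconst _ _)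
    calc G = T^[k] G := (Function.iterate_fixed hGfix k).symm
    _ = T^[k] (T^[k] 0) := hconst _ _
    _ = T^[k] 0 := Function.iterate_fixed h0fix k
end

section
/- Let A be a commutative ring, I an ideal of A with I^k = 0 for some natural number k, and T : A → A a map such that for all x, y ∈ A one has T(x) − T(y) ∈ I · span{x − y} (the product of the ideal I with the principal ideal generated by x − y). Then T has exactly one fixed point, and for every starting point x₀ ∈ A the k-fold iterate T^[k](x₀) equals this fixed point. -/
lemma iter_mem_pow (A : Type*) [CommRing A] (I : Ideal A)
    (T : A → A) (hT : ∀ x y : A, T x - T y ∈ I * Ideal.span {x - y}) :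
    ∀ n x y, T^[n] x - T^[n] y ∈ I ^ n * Ideal.span {x - y} := by
  intro n
  induction n with
  | zero =>
    intro x y
    simp only [Function.iterate_zero, id, pow_zero, one_mul]
    exact Ideal.subset_span rfl
  | succ n ih =>
    intro x y
    have h1 := hT (T^[n] x) (T^[n] y)
    have h2 : Ideal.span {T^[n] x - T^[n] y} ≤ I ^ n * Ideal.span {x - y} :=
      (Ideal.span_singleton_le_iff_mem _).mpr (ih x y)
    have h3 : I * Ideal.span {T^[n] x - T^[n] y} ≤ I ^ (n + 1) * Ideal.span {x - y} := by
      calc I * Ideal.span {T^[n] x - T^[n] y} ≤ I * (I ^ n * Ideal.span {x - y}) :=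
            Ideal.mul_mono_right h2
        _ = I ^ (n + 1) * Ideal.span {x - y} := by ring
    have := h3 h1
    simpa [Function.iterate_succ_apply'] using this

/-- Let `A` be a commutative ring, `I` an ideal of `A` with `I ^ k = 0`
for some natural number `k`, and `T : A → A` a map such that for all `x, y ∈ A` one has
`T x − T y ∈ I * span {x − y}`. Then `T` has exactly one fixed point, and for every
starting point `x₀ ∈ A` the `k`-fold iterate `T^[k] x₀` equals this fixed point. -/
theorem nilpotent_contraction_fixed_point
    (A : Type*) [CommRing A] (I : Ideal A) (k : ℕ) (hk : I ^ k = ⊥)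
    (T : A → A) (hT : ∀ x y : A, T x - T y ∈ I * Ideal.span {x - y}) :
    ∃ F : A, T F = F ∧ (∀ G : A, T G = G → G = F) ∧ ∀ x₀ : A, T^[k] x₀ = F := by
  have hconst : ∀ x y : A, T^[k] x = T^[k] y := by
    intro x y
    have := iter_mem_pow A I T hT k x y
    rw [hk, Ideal.bot_mul] at this
    have : T^[k] x - T^[k] y = 0 := this
    exact sub_eq_zero.mp this
  refine ⟨T^[k] 0, ?_, ?_, fun x₀ => hconst x₀ 0⟩
  · have : T (T^[k] 0) = T^[k] (T 0) := (Function.iterate_succ_apply' T k 0).symm.trans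
      (Function.iterate_succ_apply T k 0)
    rw [this]; exact hconst _ _
  · intro G hG
    have hfix : ∀ n, T^[n] G = G := by
      intro n; induction n with
      | zero => rfl
      | succ n ih => rw [Function.iterate_succ_apply', ih, hG]
    rw [← hfix k]; exact hconst _ _
end

section
/- Let m ≥ 1, let φ : (Fin m → ℝ) → ℝ be twice continuously differentiable (ContDiff ℝ 2), let b ∈ (Fin m → ℝ) and c ∈ ℝ, and define ψ(x) = φ(x) + c + Σ_i b_i x_i. Then at every point x, |∇ψ(x)|² Δψ(x) − |∇φ(x)|² Δφ(x) = Σ_μ ∂_μ ( y ↦ (2⟨b, ∇φ(y)⟩ + |b|²) ∂_μφ(y) − b_μ |∇φ(y)|² ) (x), i.e., the cubic Galileon density changes by an explicit total divergence under the Galilean shift. -/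
/-!
The shift adds `b` to the gradient and leaves the Hessian `H` of `φ` unchanged, so the left side
is `(2⟨b, ∇φ⟩ + |b|²) tr H`. The product rule expands the divergence into this term plus
`2 Σ_μ ⟨b, H e_μ⟩ ∂_μφ - 2 Σ_μ b_μ ⟨∇φ, H e_μ⟩`, and the last two sums cancel because `H` is
symmetric.
-/

/-- Partial derivative of `f : (Fin m → ℝ) → ℝ` along the `i`-th standard coordinate
direction, evaluated at `x`. -/
noncomputable def pd {m : ℕ} (i : Fin m) (f : (Fin m → ℝ) → ℝ) (x : Fin m → ℝ) : ℝ :=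
  fderiv ℝ f x (Pi.single i 1)

section PartialDerivative

variable {m : ℕ} {i : Fin m} {f g : (Fin m → ℝ) → ℝ} {x : Fin m → ℝ}

lemma pd_const (c : ℝ) : pd i (fun _ => c) x = 0 := by
  simp [pd]

lemma pd_apply (j : Fin m) : pd i (fun y => y j) x = Pi.single (M := fun _ => ℝ) i 1 j := by
  simp [pd, (hasFDerivAt_apply j x).fderiv]

lemma pd_add (hf : DifferentiableAt ℝ f x) (hg : DifferentiableAt ℝ g x) :
    pd i (fun y => f y + g y) x = pd i f x + pd i g x := by
  simp [pd, fderiv_fun_add hf hg]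

lemma pd_sub (hf : DifferentiableAt ℝ f x) (hg : DifferentiableAt ℝ g x) :
    pd i (fun y => f y - g y) x = pd i f x - pd i g x := by
  simp [pd, fderiv_fun_sub hf hg]

lemma pd_mul (hf : DifferentiableAt ℝ f x) (hg : DifferentiableAt ℝ g x) :
    pd i (fun y => f y * g y) x = pd i f x * g x + f x * pd i g x := by
  simp [pd, fderiv_fun_mul hf hg]
  ring

lemma pd_sq (hf : DifferentiableAt ℝ f x) :
    pd i (fun y => f y ^ 2) x = 2 * f x * pd i f x := by
  simp only [sq, pd_mul hf hf]
  ring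

lemma pd_sum {ι : Type*} (s : Finset ι) (F : ι → (Fin m → ℝ) → ℝ)
    (hF : ∀ k ∈ s, DifferentiableAt ℝ (F k) x) :
    pd i (fun y => ∑ k ∈ s, F k y) x = ∑ k ∈ s, pd i (F k) x := by
  simp [pd, fderiv_fun_sum hF]

lemma ContDiff.pd {n : WithTop ℕ∞} (hf : ContDiff ℝ (n + 1) f) : ContDiff ℝ n (pd i f) :=
  (hf.fderiv_right le_rfl).clm_apply contDiff_const

lemma pd_pd_eq_fderiv_fderiv (hf : ContDiffAt ℝ 2 f x) (j : Fin m) :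
    pd i (pd j f) x = fderiv ℝ (fderiv ℝ f) x (Pi.single i 1) (Pi.single j 1) := by
  have h : DifferentiableAt ℝ (fderiv ℝ f) x :=
    (hf.fderiv_right (m := 1) le_rfl).differentiableAt one_ne_zero
  change fderiv ℝ (fun y => fderiv ℝ f y (Pi.single j 1)) x _ = _
  simp [fderiv_clm_apply h (differentiableAt_const _)]

lemma pd_pd_comm (hf : ContDiffAt ℝ 2 f x) (j : Fin m) :
    pd i (pd j f) x = pd j (pd i f) x := by
  rw [pd_pd_eq_fderiv_fderiv hf, pd_pd_eq_fderiv_fderiv hf,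
    hf.isSymmSndFDerivAt (by simp)]

lemma pd_add_const_add_linear (hf : DifferentiableAt ℝ f x) (c : ℝ) (b : Fin m → ℝ) :
    pd i (fun y => f y + c + ∑ j, b j * y j) x = pd i f x + b i := by
  simp (disch := fun_prop) [pd_add, pd_sum, pd_mul, pd_const, pd_apply, Pi.single_apply]

end PartialDerivative

lemma galileon_shift_algebraic_identity {ι : Type*} [Fintype ι] (P b : ι → ℝ) (H : ι → ι → ℝ)
    (hH : ∀ i j, H i j = H j i) :
    (∑ i, (P i + b i) ^ 2) * ∑ i, H i i - (∑ i, P i ^ 2) * ∑ i, H i i =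
      ∑ μ, ((2 * ∑ i, b i * H μ i) * P μ + (2 * ∑ i, b i * P i + ∑ i, b i ^ 2) * H μ μ
        - b μ * ∑ i, 2 * P i * H μ i) := by
  have hcross : ∑ μ, (2 * ∑ i, b i * H μ i) * P μ = ∑ μ, b μ * ∑ i, 2 * P i * H μ i := by
    simp only [Finset.sum_mul, Finset.mul_sum]
    rw [Finset.sum_comm]
    exact Finset.sum_congr rfl fun μ _ => Finset.sum_congr rfl fun i _ => by rw [hH]; ring
  have hsq : ∑ i, (P i + b i) ^ 2 - ∑ i, P i ^ 2 = 2 * ∑ i, b i * P i + ∑ i, b i ^ 2 := by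
    rw [Finset.mul_sum, ← Finset.sum_add_distrib, ← Finset.sum_sub_distrib]
    exact Finset.sum_congr rfl fun i _ => by ring
  rw [Finset.sum_sub_distrib, Finset.sum_add_distrib, hcross, add_sub_cancel_left,
    ← Finset.mul_sum, ← sub_mul, hsq]

theorem cubic_galileon_galilean_shift_general
    (m : ℕ) (φ : (Fin m → ℝ) → ℝ) (hφ : ContDiff ℝ 2 φ)
    (b : Fin m → ℝ) (c : ℝ)
    (ψ : (Fin m → ℝ) → ℝ) (hψ : ∀ x, ψ x = φ x + c + ∑ i, b i * x i)
    (x : Fin m → ℝ) :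
    (∑ i, (pd i ψ x) ^ 2) * (∑ i, pd i (fun y => pd i ψ y) x)
        - (∑ i, (pd i φ x) ^ 2) * (∑ i, pd i (fun y => pd i φ y) x) =
      ∑ μ, pd μ (fun y =>
        (2 * (∑ i, b i * pd i φ y) + ∑ i, (b i) ^ 2) * pd μ φ y
          - b μ * ∑ i, (pd i φ y) ^ 2) x := by
  have hφ' : Differentiable ℝ φ := hφ.differentiable two_ne_zero
  have hpdφ : ∀ i, Differentiable ℝ (pd i φ) := fun i => hφ.pd.differentiable one_ne_zero
  have hgradψ : ∀ i, pd i ψ = fun y => pd i φ y + b i := fun i => by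
    funext y
    rw [funext hψ, pd_add_const_add_linear (hφ' y)]
  simp (disch := fun_prop) only [hgradψ, pd_add, pd_sub, pd_sum, pd_mul, pd_sq, pd_const,
    zero_mul, mul_zero, zero_add, add_zero, Finset.sum_const_zero]
  exact galileon_shift_algebraic_identity _ _ _ fun μ i => pd_pd_comm hφ.contDiffAt i

/-- For `φ : (Fin m → ℝ) → ℝ` twice continuously differentiable,
`b : Fin m → ℝ`, `c : ℝ`, and `ψ x = φ x + c + Σ_i b i * x i`, at every point `x`,
`|∇ψ x|² Δψ x − |∇φ x|² Δφ x
   = Σ_μ ∂_μ (y ↦ (2⟨b, ∇φ y⟩ + |b|²) ∂_μφ y − b_μ |∇φ y|²) x`: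
the cubic Galileon density changes by an explicit total divergence under the
Galilean shift. -/
theorem cubic_galileon_galilean_shift
    (m : ℕ) (hm : 1 ≤ m) (φ : (Fin m → ℝ) → ℝ) (hφ : ContDiff ℝ 2 φ)
    (b : Fin m → ℝ) (c : ℝ)
    (ψ : (Fin m → ℝ) → ℝ) (hψ : ∀ x, ψ x = φ x + c + ∑ i, b i * x i)
    (x : Fin m → ℝ) :
    (∑ i, (pd i ψ x) ^ 2) * (∑ i, pd i (fun y => pd i ψ y) x)
        - (∑ i, (pd i φ x) ^ 2) * (∑ i, pd i (fun y => pd i φ y) x) =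
      ∑ μ, pd μ (fun y =>
        (2 * (∑ i, b i * pd i φ y) + ∑ i, (b i) ^ 2) * pd μ φ y
          - b μ * ∑ i, (pd i φ y) ^ 2) x :=
  cubic_galileon_galilean_shift_general m φ hφ b c ψ hψ x
end
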